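/- In ℚ⟦X⟧ one has the identity Σ_{n=0}^∞ a^e_od(n)·X^n = ( (−X; X²)_∞ / (X²; X²)_∞ ) · ( Σ_{n=0}^∞ X^{2n²−n} / (−X; X²)_n − Σ_{n=0}^∞ X^{2n²+n} / (−X; X²)_n ). (The first inner sum is Andrews' function v₂(X) = Σ_{n≥0} X^{2n²−n}/(−X;X²)_n.) -/

import Mathlib

open PowerSeries Finset
open scoped Classical

noncomputable section

instance : TopologicalSpace (PowerSeries ℚ) :=
  @Pi.topologicalSpace (Unit →₀ ℕ) (fun _ => ℚ) (fun _ => inferInstance)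

/-- `(ε X^b ; X^d)_∞ = ∏_{k=0}^∞ (1 - ε X^{b+dk})`, a coefficientwise-convergent
infinite product in `ℚ⟦X⟧` with the product topology. -/
def pochInf (ε : ℚ) (b d : ℕ) : PowerSeries ℚ :=
  ∏' k : ℕ, (1 - PowerSeries.C (R := ℚ) ε * PowerSeries.X ^ (b + d * k))

/-- `(ε X^b ; X^d)_m = ∏_{k=0}^{m-1} (1 - ε X^{b+dk})` -/
def pochFin (ε : ℚ) (b d m : ℕ) : PowerSeries ℚ :=
  ∏ k ∈ Finset.range m, (1 - PowerSeries.C (R := ℚ) ε * PowerSeries.X ^ (b + d * k))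

/-- the smallest positive integer that is not a part of `l` -/
def pmex {n : ℕ} (l : n.Partition) : ℕ := sInf {k : ℕ | 0 < k ∧ k ∉ l.parts}

/-- the smallest odd positive integer that is not a part of `l` -/
def pmoex {n : ℕ} (l : n.Partition) : ℕ := sInf {k : ℕ | Odd k ∧ k ∉ l.parts}

/-- the smallest even positive integer that is not a part of `l` -/
def pmeex {n : ℕ} (l : n.Partition) : ℕ := sInf {k : ℕ | Even k ∧ 0 < k ∧ k ∉ l.parts}

/-- every odd part occurs at most once -/
def OddDistinct {n : ℕ} (l : n.Partition) : Prop := ∀ i, Odd i → l.parts.count i ≤ 1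

/-- every even part occurs at most once -/
def EvenDistinct {n : ℕ} (l : n.Partition) : Prop := ∀ i, Even i → l.parts.count i ≤ 1

/-- `a^e_od(n)`: number of partitions of `n` with distinct odd parts and even mex -/
def aeod (n : ℕ) : ℕ :=
  (Finset.univ.filter fun l : n.Partition => OddDistinct l ∧ Even (pmex l)).card

instance : T2Space (PowerSeries ℚ) := inferInstanceAs (T2Space ((Unit →₀ ℕ) → ℚ))

/- ## Archive machinery (from Wiedijk100Theorems.Partition) -/

def indicatorSeries (α : Type*) [Semiring α] (s : Set ℕ) : PowerSeries α :=
  PowerSeries.mk fun n => if n ∈ s then 1 else 0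

variable {α : Type*}

theorem coeff_indicator (s : Set ℕ) [Semiring α] (n : ℕ) :
    coeff (R := α) n (indicatorSeries _ s) = if n ∈ s then 1 else 0 :=
  coeff_mk _ _

theorem coeff_indicator_pos (s : Set ℕ) [Semiring α] (n : ℕ) (h : n ∈ s) :
    coeff (R := α) n (indicatorSeries _ s) = 1 := by rw [coeff_indicator, if_pos h]

theorem coeff_indicator_neg (s : Set ℕ) [Semiring α] (n : ℕ) (h : n ∉ s) :
    coeff (R := α) n (indicatorSeries _ s) = 0 := by rw [coeff_indicator, if_neg h]

theorem constantCoeff_indicator (s : Set ℕ) [Semiring α] :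
    constantCoeff (R := α) (indicatorSeries _ s) = if 0 ∈ s then 1 else 0 :=
  rfl

theorem two_series (i : ℕ) [Semiring α] :
    1 + (X : PowerSeries α) ^ i.succ = indicatorSeries α {0, i.succ} := by
  ext n
  simp only [coeff_indicator, coeff_one, coeff_X_pow, Set.mem_insert_iff, Set.mem_singleton_iff,
    map_add]
  cases' n with d
  · simp [(Nat.succ_ne_zero i).symm]
  · simp [Nat.succ_ne_zero d]

theorem num_series' [Field α] (i : ℕ) :
    (1 - (X : PowerSeries α) ^ (i + 1))⁻¹ = indicatorSeries α {k | i + 1 ∣ k} := by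
  rw [PowerSeries.inv_eq_iff_mul_eq_one]
  · ext n
    cases n with
    | zero => simp [mul_sub, zero_pow, constantCoeff_indicator]
    | succ n =>
      simp only [coeff_one, if_false, mul_sub, mul_one, coeff_indicator,
        LinearMap.map_sub, reduceCtorEq]
      simp_rw [coeff_mul, coeff_X_pow, coeff_indicator, @boole_mul _ _ _ _]
      erw [@sum_ite _ _ _ _ _ (fun _ => Classical.propDecidable _), sum_ite]
      simp_rw [@filter_filter _ _ _ _ _, sum_const_zero, add_zero, sum_const, nsmul_eq_mul, mul_one,
        sub_eq_iff_eq_add, zero_add]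
      symm
      split_ifs with h
      · suffices #{a ∈ antidiagonal (n + 1) | i + 1 ∣ a.fst ∧ a.snd = i + 1} = 1 by
          simp only [Set.mem_setOf_eq]; convert congr_arg ((↑) : ℕ → α) this; norm_cast
        rw [card_eq_one]
        cases' h with p hp
        refine ⟨((i + 1) * (p - 1), i + 1), ?_⟩
        ext ⟨a₁, a₂⟩
        simp only [mem_filter, Prod.mk.injEq, HasAntidiagonal.mem_antidiagonal, mem_singleton]
        constructor
        · rintro ⟨a_left, ⟨a, rfl⟩, rfl⟩
          refine ⟨?_, rfl⟩
          rw [Nat.mul_sub_left_distrib, ← hp, ← a_left, mul_one, Nat.add_sub_cancel]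
        · rintro ⟨rfl, rfl⟩
          match p with
          | 0 => rw [mul_zero] at hp; cases hp
          | p + 1 => rw [hp]; simp [mul_add]
      · suffices #{a ∈ antidiagonal (n + 1) | i + 1 ∣ a.fst ∧ a.snd = i + 1} = 0 by
          simp only [Set.mem_setOf_eq]; convert congr_arg ((↑) : ℕ → α) this; norm_cast
        rw [card_eq_zero]
        apply eq_empty_of_forall_notMem
        simp only [Prod.forall, mem_filter, not_and, HasAntidiagonal.mem_antidiagonal]
        rintro _ h₁ h₂ ⟨a, rfl⟩ rfl
        apply h
        simp [← h₂]
  · simp [zero_pow]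

theorem partialGF_prop (α : Type*) [CommSemiring α] (n : ℕ) (s : Finset ℕ) (hs : ∀ i ∈ s, 0 < i)
    (c : ℕ → Set ℕ) (hc : ∀ i, i ∉ s → 0 ∈ c i) :
    #{p : n.Partition | (∀ j, p.parts.count j ∈ c j) ∧ ∀ j ∈ p.parts, j ∈ s} =
      coeff (R := α) n (∏ i ∈ s, indicatorSeries α ((· * i) '' c i)) := by
  simp_rw [coeff_prod, coeff_indicator, prod_boole, sum_boole]
  apply congr_arg
  simp only [mem_univ, forall_true_left, not_and, not_forall, exists_prop,
    Set.mem_image, not_exists]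
  set φ : (a : Nat.Partition n) →
    a ∈ filter (fun p ↦ (∀ (j : ℕ), Multiset.count j p.parts ∈ c j) ∧ ∀ j ∈ p.parts, j ∈ s) univ →
    ℕ →₀ ℕ := fun p _ => {
      toFun := fun i => Multiset.count i p.parts • i
      support := Finset.filter (fun i => i ≠ 0) p.parts.toFinset
      mem_support_toFun := fun a => by
        simp only [smul_eq_mul, ne_eq, mul_eq_zero, Multiset.count_eq_zero]
        rw [not_or, not_not]
        simp only [Multiset.mem_toFinset, not_not, mem_filter] }
  refine Finset.card_bij φ ?_ ?_ ?_
  · intro a ha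
    simp only [φ, not_forall, not_exists, not_and, exists_prop, mem_filter]
    rw [mem_finsuppAntidiag]
    dsimp only [ne_eq, smul_eq_mul, id_eq, eq_mpr_eq_cast, le_eq_subset, Finsupp.coe_mk]
    simp only [mem_univ, forall_true_left, not_and, not_forall, exists_prop,
      mem_filter, true_and] at ha
    refine ⟨⟨?_, fun i ↦ ?_⟩, fun i _ ↦ ⟨a.parts.count i, ha.1 i, rfl⟩⟩
    · conv_rhs => simp [← a.parts_sum]
      rw [sum_multiset_count_of_subset _ s]
      · simp only [smul_eq_mul]
      · intro i
        simp only [Multiset.mem_toFinset, not_not, mem_filter]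
        apply ha.2
    · simp only [ne_eq, Multiset.mem_toFinset, not_not, mem_filter, and_imp]
      exact fun hi _ ↦ ha.2 i hi
  · intro p₁ hp₁ p₂ hp₂ h
    apply Nat.Partition.ext
    simp only [true_and, mem_univ, mem_filter] at hp₁ hp₂
    ext i
    simp only [φ, ne_eq, Multiset.mem_toFinset, not_not, smul_eq_mul, Finsupp.mk.injEq] at h
    by_cases hi : i = 0
    · rw [hi]
      rw [Multiset.count_eq_zero_of_notMem]
      · rw [Multiset.count_eq_zero_of_notMem]
        intro a; exact Nat.lt_irrefl 0 (hs 0 (hp₂.2 0 a))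
      intro a; exact Nat.lt_irrefl 0 (hs 0 (hp₁.2 0 a))
    · rw [← mul_left_inj' hi]
      rw [funext_iff] at h
      exact h.2 i
  · simp only [φ, mem_filter, mem_finsuppAntidiag, mem_univ, exists_prop, true_and, and_assoc]
    rintro f ⟨hf, hf₃, hf₄⟩
    have hf' : f ∈ finsuppAntidiag s n := mem_finsuppAntidiag.mpr ⟨hf, hf₃⟩
    simp only [mem_finsuppAntidiag] at hf'
    refine ⟨⟨∑ i ∈ s, Multiset.replicate (f i / i) i, ?_, ?_⟩, ?_, ?_, ?_⟩
    · intro i hi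
      simp only [exists_prop, Multiset.mem_sum, mem_map, Function.Embedding.coeFn_mk] at hi
      rcases hi with ⟨t, ht, z⟩
      apply hs
      rwa [Multiset.eq_of_mem_replicate z]
    · simp_rw [Multiset.sum_sum, Multiset.sum_replicate, Nat.nsmul_eq_mul]
      rw [← hf'.1]
      refine sum_congr rfl fun i hi => Nat.div_mul_cancel ?_
      rcases hf₄ i hi with ⟨w, _, hw₂⟩
      rw [← hw₂]
      exact dvd_mul_left _ _
    · intro i
      simp_rw [Multiset.count_sum', Multiset.count_replicate, sum_ite_eq']
      split_ifs with h
      · rcases hf₄ i h with ⟨w, hw₁, hw₂⟩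
        rwa [← hw₂, Nat.mul_div_cancel _ (hs i h)]
      · exact hc _ h
    · intro i hi
      rw [Multiset.mem_sum] at hi
      rcases hi with ⟨j, hj₁, hj₂⟩
      rwa [Multiset.eq_of_mem_replicate hj₂]
    · ext i
      simp_rw [Multiset.count_sum', Multiset.count_replicate, sum_ite_eq']
      simp only [ne_eq, Multiset.mem_toFinset, not_not, smul_eq_mul, ite_mul,
        zero_mul, Finsupp.coe_mk]
      split_ifs with h
      · apply Nat.div_mul_cancel
        rcases hf₄ i h with ⟨w, _, hw₂⟩
        apply Dvd.intro_left _ hw₂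
      · apply symm
        rw [← Finsupp.notMem_support_iff]
        exact notMem_mono hf'.2 h



/-- coefficients agree up to degree `d` -/
def lowEq (d : ℕ) (a b : PowerSeries ℚ) : Prop := ∀ q ≤ d, coeff (R := ℚ) q a = coeff (R := ℚ) q b

theorem lowEq.coeff {d : ℕ} {a b : PowerSeries ℚ} (h : lowEq d a b) : coeff (R := ℚ) d a = coeff (R := ℚ) d b :=
  h d le_rfl

theorem lowEq_rfl {d : ℕ} {a : PowerSeries ℚ} : lowEq d a a := fun _ _ => Eq.refl _

theorem lowEq.symm {d : ℕ} {a b : PowerSeries ℚ} (h : lowEq d a b) : lowEq d b a :=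
  fun q hq => (h q hq).symm

theorem lowEq.trans {d : ℕ} {a b c : PowerSeries ℚ} (h : lowEq d a b) (h' : lowEq d b c) :
    lowEq d a c := fun q hq => (h q hq).trans (h' q hq)

theorem lowEq.mul {d : ℕ} {a b a' b' : PowerSeries ℚ} (h : lowEq d a a') (h' : lowEq d b b') :
    lowEq d (a * b) (a' * b') := by
  intro q hq
  rw [coeff_mul, coeff_mul]
  refine Finset.sum_congr (Eq.refl _) fun p hp => ?_
  rw [HasAntidiagonal.mem_antidiagonal] at hp
  rw [h p.1 (le_trans (by omega) hq), h' p.2 (le_trans (by omega) hq)]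

theorem lowEq.sub {d : ℕ} {a b a' b' : PowerSeries ℚ} (h : lowEq d a a') (h' : lowEq d b b') :
    lowEq d (a - b) (a' - b') := by
  intro q hq; simp [map_sub, h q hq, h' q hq]

theorem lowEq_one_high {d e : ℕ} (c : ℚ) (he : d < e) :
    lowEq d (1 - PowerSeries.C (R := ℚ) c * X ^ e) 1 := by
  intro q hq
  rw [map_sub, coeff_C_mul, coeff_X_pow, if_neg (by omega), mul_zero, sub_zero]

theorem lowEq_prod_one {d : ℕ} (f : ℕ → PowerSeries ℚ) (t : Finset ℕ)
    (h : ∀ k ∈ t, lowEq d (f k) 1) : lowEq d (∏ k ∈ t, f k) 1 := by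
  classical
  induction t using Finset.induction_on with
  | empty => exact lowEq_rfl
  | @insert x s hx ih =>
    rw [Finset.prod_insert hx]
    have := (h x (mem_insert_self _ _)).mul (ih fun k hk => h k (mem_insert_of_mem hk))
    simpa using this

theorem lowEq_prod_subset {d : ℕ} (f : ℕ → PowerSeries ℚ) {s t : Finset ℕ} (hst : t ⊆ s)
    (h : ∀ k ∈ s, k ∉ t → lowEq d (f k) 1) :
    lowEq d (∏ k ∈ s, f k) (∏ k ∈ t, f k) := by
  rw [← Finset.prod_sdiff hst]
  have h1 : lowEq d (∏ k ∈ s \ t, f k) 1 :=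
    lowEq_prod_one f _ fun k hk => by
      rw [mem_sdiff] at hk; exact h k hk.1 hk.2
  have := h1.mul (lowEq_rfl (a := ∏ k ∈ t, f k))
  simpa using this

-- tprod evaluation
theorem hasProd_poch (ε : ℚ) (b d : ℕ) (hb : 0 < b) (hd : 0 < d) :
    HasProd (fun k => 1 - PowerSeries.C (R := ℚ) ε * X ^ (b + d * k))
      (PowerSeries.mk fun N => coeff (R := ℚ) N (pochFin ε b d (N + 1))) := by
  rw [HasProd, SummationFilter.unconditional_filter]
  refine tendsto_pi_nhds.2 ?_
  intro i
  have hi : i = Finsupp.single () (i ()) := by ext; simp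
  rw [hi]
  apply Filter.Tendsto.congr' _ tendsto_const_nhds
  filter_upwards [Filter.eventually_ge_atTop (range (i () + 1))] with s hs
  show coeff (R := ℚ) (i ()) (PowerSeries.mk fun N => coeff (R := ℚ) N (pochFin ε b d (N + 1))) = _
  set n := i ()
  rw [coeff_mk]
  have h1 : lowEq n (∏ k ∈ s, (1 - PowerSeries.C (R := ℚ) ε * X ^ (b + d * k)))
      (∏ k ∈ range (n + 1), (1 - PowerSeries.C (R := ℚ) ε * X ^ (b + d * k))) := by
    apply lowEq_prod_subset _ hs
    intro k _ hk
    rw [mem_range, not_lt] at hk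
    exact lowEq_one_high ε (by nlinarith)
  exact h1.coeff.symm

theorem pochInf_eq (ε : ℚ) (b d : ℕ) (hb : 0 < b) (hd : 0 < d) :
    pochInf ε b d = PowerSeries.mk fun N => coeff (R := ℚ) N (pochFin ε b d (N + 1)) :=
  (hasProd_poch ε b d hb hd).tprod_eq

theorem lowEq_pochFin (ε : ℚ) (b d : ℕ) {N M₁ M₂ : ℕ} (h₁ : N < b + d * M₁)
    (h₂ : N < b + d * M₂) : lowEq N (pochFin ε b d M₁) (pochFin ε b d M₂) := by
  wlog h : M₂ ≤ M₁ generalizing M₁ M₂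
  · exact (this h₂ h₁ (by omega)).symm
  apply lowEq_prod_subset _ (Finset.range_subset_range.2 h)
  intro k _ hk
  rw [mem_range, not_lt] at hk
  exact lowEq_one_high ε (by nlinarith)

theorem lowEq_pochInf (ε : ℚ) (b d : ℕ) (hb : 0 < b) (hd : 0 < d) {N M : ℕ}
    (h : N < b + d * M) : lowEq N (pochInf ε b d) (pochFin ε b d M) := by
  intro q hq
  rw [pochInf_eq ε b d hb hd, coeff_mk]
  have h1 : lowEq q (pochFin ε b d (q + 1)) (pochFin ε b d M) :=
    lowEq_pochFin ε b d (by nlinarith) (by nlinarith)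
  exact h1.coeff

-- tsum evaluation
theorem hasSum_of_coeff (f : ℕ → PowerSeries ℚ) (a : PowerSeries ℚ)
    (h : ∀ d : ℕ, HasSum (fun n => coeff (R := ℚ) d (f n)) (coeff (R := ℚ) d a)) : HasSum f a := by
  refine (Pi.hasSum (f := fun n => (f n : (Unit →₀ ℕ) → ℚ)) (g := a)).2 ?_
  intro i
  have hi : i = Finsupp.single () (i ()) := by ext; simp
  rw [hi]
  exact h (i ())

theorem hasSum_ord (f : ℕ → PowerSeries ℚ) (h : ∀ d n, d < n → coeff (R := ℚ) d (f n) = 0) :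
    HasSum f (PowerSeries.mk fun d => ∑ n ∈ range (d + 1), coeff (R := ℚ) d (f n)) := by
  apply hasSum_of_coeff
  intro d
  rw [coeff_mk]
  apply hasSum_sum_of_ne_finset_zero
  intro n hn
  rw [mem_range, not_lt] at hn
  exact h d n (by omega)

theorem part_le {n : ℕ} (l : n.Partition) {i : ℕ} (hi : i ∈ l.parts) : i ≤ n := by
  conv_rhs => rw [← l.parts_sum]
  exact Multiset.single_le_sum (fun _ _ => Nat.zero_le _) _ hi

theorem pmex_set_nonempty {n : ℕ} (l : n.Partition) :
    {k : ℕ | 0 < k ∧ k ∉ l.parts}.Nonempty := by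
  refine ⟨n + 1, Nat.succ_pos n, fun h => ?_⟩
  have := part_le l h; omega

theorem pmex_spec {n : ℕ} (l : n.Partition) : 0 < pmex l ∧ pmex l ∉ l.parts :=
  Nat.sInf_mem (pmex_set_nonempty l)

theorem pmex_min {n : ℕ} (l : n.Partition) {k : ℕ} (h0 : 0 < k) (h : k < pmex l) :
    k ∈ l.parts := by
  by_contra hk
  have h2 : pmex l ≤ k := Nat.sInf_le ⟨h0, hk⟩
  omega

theorem pmex_le {n : ℕ} (l : n.Partition) : pmex l ≤ n + 1 :=
  Nat.sInf_le ⟨Nat.succ_pos n, fun h => by have := part_le l h; omega⟩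

theorem pmex_eq_iff {n : ℕ} (l : n.Partition) (m : ℕ) (hm : 0 < m) :
    pmex l = m ↔ m ∉ l.parts ∧ ∀ k, 0 < k → k < m → k ∈ l.parts := by
  constructor
  · rintro rfl
    exact ⟨(pmex_spec l).2, fun k h0 hk => pmex_min l h0 hk⟩
  · rintro ⟨h1, h2⟩
    have hle : pmex l ≤ m := Nat.sInf_le ⟨hm, h1⟩
    rcases lt_or_eq_of_le hle with h | h
    · have := h2 _ (pmex_spec l).1 h
      exact absurd this (pmex_spec l).2
    · exact h

/-- number of odd-distinct partitions of `q` with `pmex = 2*j` -/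
def Scard (q j : ℕ) : ℕ :=
  (Finset.univ.filter fun l : q.Partition => OddDistinct l ∧ pmex l = 2 * j).card

theorem aeod_eq_sum (q M : ℕ) (hq : q < M) :
    aeod q = ∑ j ∈ Finset.Icc 1 M, Scard q j := by
  rw [aeod]
  rw [Finset.card_eq_sum_card_fiberwise
    (f := fun l : q.Partition => pmex l / 2) (t := Finset.Icc 1 M) ?_]
  · refine Finset.sum_congr rfl fun j hj => ?_
    rw [Scard, Finset.filter_filter]
    congr 1
    ext l
    simp only [Finset.mem_filter, Finset.mem_univ, true_and]
    rw [Finset.mem_Icc] at hj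
    constructor
    · rintro ⟨⟨h1, r, hr⟩, h3⟩
      exact ⟨h1, by omega⟩
    · rintro ⟨h1, h2⟩
      exact ⟨⟨h1, ⟨j, by omega⟩⟩, by omega⟩
  · intro l hl
    simp only [Finset.coe_filter, Finset.mem_univ, true_and, Set.mem_setOf_eq] at hl
    obtain ⟨r, hr⟩ := hl.2
    have h1 := (pmex_spec l).1
    have h2 := pmex_le l
    rw [Finset.mem_coe, Finset.mem_Icc]
    show 1 ≤ pmex l / 2 ∧ pmex l / 2 ≤ M
    omega
/-- index set: all integers in `[1, 2M]`, as union of odds and evens -/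
def sOdd (M : ℕ) : Finset ℕ := (range M).image (fun k => 2 * k + 1)
def sEven (M : ℕ) : Finset ℕ := (Icc 1 M).image (fun k => 2 * k)
def sAll (M : ℕ) : Finset ℕ := sOdd M ∪ sEven M

theorem mem_sAll {M i : ℕ} (h0 : 0 < i) (hi : i ≤ 2 * M) : i ∈ sAll M := by
  rw [sAll, mem_union, sOdd, sEven]
  rcases Nat.even_or_odd i with ⟨r, hr⟩ | ⟨r, hr⟩
  · right; rw [mem_image]; exact ⟨r, by rw [mem_Icc]; omega, by omega⟩
  · left; rw [mem_image]; exact ⟨r, by rw [mem_range]; omega, by omega⟩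

theorem sAll_pos {M i : ℕ} (h : i ∈ sAll M) : 0 < i := by
  rw [sAll, mem_union, sOdd, sEven, mem_image, mem_image] at h
  rcases h with ⟨r, _, hr⟩ | ⟨r, hr, hr'⟩
  · omega
  · rw [mem_Icc] at hr; omega

/-- multiplicity constraints for an odd-distinct partition with mex `2j` -/
def cset (j : ℕ) : ℕ → Set ℕ := fun i =>
  if i = 0 then Set.univ
  else if Odd i then (if i < 2 * j then {1} else {0, 1})
  else if i < 2 * j then {k | 0 < k} else if i = 2 * j then {0} else Set.univ

theorem count_mem_iff {q j : ℕ} (hj : 0 < j) (l : q.Partition) :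
    (∀ i, l.parts.count i ∈ cset j i) ↔ (OddDistinct l ∧ pmex l = 2 * j) := by
  constructor
  · intro h
    have hod : OddDistinct l := by
      intro i hodd
      have hi := h i
      have h0 : i ≠ 0 := by rintro rfl; simp at hodd
      rw [cset] at hi
      rw [if_neg h0, if_pos hodd] at hi
      split_ifs at hi with h1
      · rw [Set.mem_singleton_iff] at hi; omega
      · rcases hi with hi | hi <;> simp_all
    refine ⟨hod, (pmex_eq_iff l _ (by omega)).2 ⟨?_, ?_⟩⟩
    · have hi := h (2 * j)
      rw [cset, if_neg (by omega), if_neg (by simp [Nat.even_iff, parity_simps]), if_neg (by omega),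
        if_pos rfl, Set.mem_singleton_iff] at hi
      rw [← Multiset.count_pos] at *
      omega
    · intro k h0 hk
      have hi := h k
      rw [cset, if_neg (by omega)] at hi
      rw [← Multiset.count_pos]
      rcases Nat.even_or_odd k with he | ho
      · rw [if_neg (by simpa [Nat.odd_iff, Nat.even_iff] using he), if_pos hk] at hi
        exact hi
      · rw [if_pos ho, if_pos hk, Set.mem_singleton_iff] at hi; omega
  · rintro ⟨hod, hpm⟩
    rw [pmex_eq_iff l _ (by omega)] at hpm
    intro i
    rw [cset]
    split_ifs with h0 hodd h1 h1 h2
    · trivial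
    · have hmem := hpm.2 i (by omega) h1
      have := hod i hodd
      rw [← Multiset.count_pos] at hmem
      rw [Set.mem_singleton_iff]; omega
    · have := hod i hodd
      rcases Nat.lt_or_ge (l.parts.count i) 1 with h | h
      · left; omega
      · right; rw [Set.mem_singleton_iff]; omega
    · have hmem := hpm.2 i (by omega) h1
      rw [← Multiset.count_pos] at hmem
      exact hmem
    · have := hpm.1
      rw [← Multiset.count_pos] at this
      rw [h2, Set.mem_singleton_iff] at *
      omega
    · trivial

theorem Scard_eq_coeff {q j M : ℕ} (hj : 0 < j) (hq : q ≤ M) (hjM : j ≤ M) :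
    (Scard q j : ℚ) = coeff (R := ℚ) q (∏ i ∈ sAll M, indicatorSeries ℚ ((· * i) '' cset j i)) := by
  rw [← partialGF_prop ℚ q (sAll M) (fun i h => sAll_pos h) (cset j) ?_]
  · norm_cast
    rw [Scard]
    congr 1
    apply Finset.filter_congr
    intro l _
    rw [← count_mem_iff hj l]
    constructor
    · intro h1
      refine ⟨h1, fun i hi => mem_sAll (l.parts_pos hi) ?_⟩
      have := part_le l hi; omega
    · rintro ⟨h1, _⟩; exact h1
  · intro i hi
    rw [cset]
    split_ifs with h0 hodd h1 h1 h2
    · trivial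
    · exact absurd (mem_sAll (by omega) (by omega)) hi
    · left; rfl
    · exact absurd (mem_sAll (by omega) (by omega)) hi
    · rfl
    · trivial

/- ## closed forms of the indicator series -/

theorem ind_one (i : ℕ) : indicatorSeries ℚ ((· * i) '' {1}) = X ^ i := by
  have himg : (· * i) '' {1} = {i} := by ext n; simp
  rw [himg]
  ext n
  rw [coeff_indicator, coeff_X_pow]
  simp [Set.mem_singleton_iff, eq_comm]

theorem ind_zero_set (i : ℕ) : indicatorSeries ℚ ((· * i) '' {0}) = 1 := by
  have himg : (· * i) '' {0} = {0} := by ext n; simp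
  rw [himg]
  ext n
  rw [coeff_indicator, coeff_one]
  simp [Set.mem_singleton_iff, eq_comm]

theorem ind_two_set {i : ℕ} (h : 0 < i) : indicatorSeries ℚ ((· * i) '' {0, 1}) = 1 + X ^ i := by
  obtain ⟨k, rfl⟩ : ∃ k, i = k + 1 := ⟨i - 1, by omega⟩
  have himg : (· * (k + 1)) '' {0, 1} = {0, k + 1} := by
    ext n
    simp only [Set.mem_image, Set.mem_insert_iff, Set.mem_singleton_iff]
    constructor
    · rintro ⟨a, (rfl | rfl), rfl⟩
      · left; simp
      · right; simp
    · rintro (rfl | rfl)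
      · exact ⟨0, Or.inl rfl, by simp⟩
      · exact ⟨1, Or.inr rfl, by simp⟩
  rw [himg, ← two_series]

theorem ind_univ_set {i : ℕ} (h : 0 < i) :
    indicatorSeries ℚ ((· * i) '' Set.univ) = (1 - X ^ i)⁻¹ := by
  obtain ⟨k, rfl⟩ : ∃ k, i = k + 1 := ⟨i - 1, by omega⟩
  have himg : (· * (k + 1)) '' Set.univ = {n | k + 1 ∣ n} := by
    ext n
    constructor
    · rintro ⟨a, -, rfl⟩; exact Dvd.intro_left a rfl
    · rintro ⟨a, rfl⟩; exact ⟨a, trivial, mul_comm _ _⟩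
  rw [himg, ← num_series']

theorem ind_pos_set {i : ℕ} (h : 0 < i) :
    indicatorSeries ℚ ((· * i) '' {k | 0 < k}) = X ^ i * (1 - X ^ i)⁻¹ := by
  obtain ⟨k, rfl⟩ : ∃ k, i = k + 1 := ⟨i - 1, by omega⟩
  rw [num_series']
  ext n
  rw [coeff_indicator, PowerSeries.coeff_X_pow_mul', coeff_indicator]
  have hmem : n ∈ (· * (k + 1)) '' {k | 0 < k} ↔ (k + 1 ≤ n ∧ k + 1 ∣ n - (k + 1)) := by
    constructor
    · rintro ⟨a, ha, rfl⟩
      simp only [Set.mem_setOf_eq] at ha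
      obtain ⟨c, rfl⟩ : ∃ c, a = c + 1 := ⟨a - 1, by omega⟩
      dsimp only
      refine ⟨by nlinarith, ⟨c, ?_⟩⟩
      have hc : (c + 1) * (k + 1) = c * (k + 1) + (k + 1) := by ring
      have hc2 : (k + 1) * c = c * (k + 1) := mul_comm _ _
      omega
    · rintro ⟨h1, b, hb⟩
      refine ⟨b + 1, by simp, ?_⟩
      dsimp only
      have hc : (b + 1) * (k + 1) = (k + 1) * b + (k + 1) := by ring
      omega
  simp only [hmem, Set.mem_setOf_eq]
  split_ifs <;> tauto

/- ## arithmetic helpers -/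

theorem sum_odds (j : ℕ) : ∑ k ∈ range j, (2 * k + 1) = j ^ 2 := by
  induction j with
  | zero => simp
  | succ n ih =>
    rw [Finset.sum_range_succ, ih]
    have h1 : (n + 1) ^ 2 = n ^ 2 + 2 * n + 1 := by ring
    omega

theorem sum_evens (j : ℕ) : ∑ k ∈ Finset.Ico 1 j, 2 * k = j * (j - 1) := by
  induction j with
  | zero => simp
  | succ n ih =>
    rcases Nat.eq_zero_or_pos n with rfl | hn
    · simp
    · rw [Finset.sum_Ico_succ_top (by omega), ih]
      obtain ⟨m, rfl⟩ : ∃ m, n = m + 1 := ⟨n - 1, by omega⟩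
      have q1 : (m + 1) * (m + 1 - 1) = m * m + m := by rw [Nat.add_sub_cancel]; ring
      have q2 : (m + 1 + 1) * (m + 1 + 1 - 1) = m * m + 3 * m + 2 := by
        rw [Nat.add_sub_cancel]; ring
      omega

theorem one_sub_neg (e : ℕ) : 1 - PowerSeries.C (R := ℚ) (-1) * X ^ e = 1 + (X : PowerSeries ℚ) ^ e := by
  rw [map_neg, map_one]; ring

theorem unit_cc {e : ℕ} (he : 0 < e) : constantCoeff (R := ℚ) (1 - (X : PowerSeries ℚ) ^ e) ≠ 0 := by
  rw [map_sub, map_one, ← coeff_zero_eq_constantCoeff, coeff_X_pow, if_neg (by omega)]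
  norm_num

/- ## the finite key identity -/

theorem dagger (j M : ℕ) (hj : 0 < j) (hjM : j ≤ M) :
    (∏ i ∈ sAll M, indicatorSeries ℚ ((· * i) '' cset j i)) * pochFin 1 2 2 M =
      (X ^ (2 * j ^ 2 - j) - X ^ (2 * j ^ 2 + j)) *
        ∏ k ∈ Finset.Ico j M, (1 - PowerSeries.C (R := ℚ) (-1) * X ^ (1 + 2 * k)) := by
  -- split the index set
  have hdisj : Disjoint (sOdd M) (sEven M) := by
    rw [Finset.disjoint_left]
    intro a ha hb
    rw [sOdd, mem_image] at ha
    rw [sEven, mem_image] at hb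
    obtain ⟨r, _, rfl⟩ := ha
    obtain ⟨t, _, ht⟩ := hb
    omega
  rw [sAll, Finset.prod_union hdisj]
  -- odd part
  have hoddinj : Set.InjOn (fun k => 2 * k + 1) (range M) := fun a _ b _ h => by
    dsimp only at h; omega
  have heveninj : Set.InjOn (fun k => 2 * k) (Finset.Icc 1 M) := fun a _ b _ h => by
    dsimp only at h; omega
  rw [sOdd, Finset.prod_image hoddinj, sEven, Finset.prod_image heveninj]
  have hodd : (∏ k ∈ range M, indicatorSeries ℚ ((· * (2 * k + 1)) '' cset j (2 * k + 1))) =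
      X ^ (j ^ 2) * ∏ k ∈ Finset.Ico j M, (1 + (X : PowerSeries ℚ) ^ (2 * k + 1)) := by
    rw [← Finset.prod_range_mul_prod_Ico _ hjM]
    congr 1
    · rw [← sum_odds j, ← Finset.prod_pow_eq_pow_sum]
      refine Finset.prod_congr rfl fun k hk => ?_
      rw [mem_range] at hk
      rw [cset, if_neg (by omega), if_pos (by exact ⟨k, by omega⟩), if_pos (by omega), ind_one]
    · refine Finset.prod_congr rfl fun k hk => ?_
      rw [Finset.mem_Ico] at hk
      rw [cset, if_neg (by omega), if_pos (by exact ⟨k, by omega⟩), if_neg (by omega),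
        ind_two_set (by omega)]
  -- even part * pochFin
  have hqfin : pochFin 1 2 2 M = ∏ k ∈ Finset.Icc 1 M, (1 - (X : PowerSeries ℚ) ^ (2 * k)) := by
    rw [pochFin]
    have : Finset.Icc 1 M = Finset.Ico 1 (M + 1) := by rw [Finset.Ico_add_one_right_eq_Icc]
    rw [this, Finset.prod_Ico_eq_prod_range]
    simp only [map_one, one_mul, Nat.add_sub_cancel]
    refine Finset.prod_congr rfl fun k _ => by congr 2 <;> omega
  have heven : (∏ k ∈ Finset.Icc 1 M, indicatorSeries ℚ ((· * (2 * k)) '' cset j (2 * k))) *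
      pochFin 1 2 2 M = X ^ (j * (j - 1)) * (1 - (X : PowerSeries ℚ) ^ (2 * j)) := by
    rw [hqfin, ← Finset.prod_mul_distrib]
    have hf : ∀ k ∈ Finset.Icc 1 M,
        indicatorSeries ℚ ((· * (2 * k)) '' cset j (2 * k)) * (1 - (X : PowerSeries ℚ) ^ (2 * k)) =
        if k < j then X ^ (2 * k) else if k = j then (1 - (X : PowerSeries ℚ) ^ (2 * j)) else 1 := by
      intro k hk
      rw [Finset.mem_Icc] at hk
      have hodd' : ¬ Odd (2 * k) := by rw [Nat.odd_iff]; omega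
      by_cases h1 : k < j
      · rw [if_pos h1, cset, if_neg (by omega), if_neg hodd', if_pos (by omega),
          ind_pos_set (by omega), mul_assoc,
          PowerSeries.inv_mul_cancel _ (unit_cc (by omega)), mul_one]
      · by_cases h2 : k = j
        · subst h2
          rw [if_neg h1, if_pos rfl, cset, if_neg (by omega), if_neg hodd', if_neg (by omega),
            if_pos rfl, ind_zero_set, one_mul]
        · rw [if_neg h1, if_neg h2, cset, if_neg (by omega), if_neg hodd', if_neg (by omega),
            if_neg (by omega), ind_univ_set (by omega),
            PowerSeries.inv_mul_cancel _ (unit_cc (by omega))]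
    rw [Finset.prod_congr rfl hf]
    have hIcc : Finset.Icc 1 M = Finset.Ico 1 (M + 1) := by rw [Finset.Ico_add_one_right_eq_Icc]
    rw [hIcc, ← Finset.prod_Ico_consecutive _ (by omega : 1 ≤ j) (by omega : j ≤ M + 1),
      Finset.prod_eq_prod_Ico_succ_bot (by omega : j < M + 1)]
    have e1 : (∏ k ∈ Finset.Ico 1 j,
        if k < j then (X : PowerSeries ℚ) ^ (2 * k) else if k = j then (1 - (X : PowerSeries ℚ) ^ (2 * j)) else 1)
        = X ^ (j * (j - 1)) := by
      rw [← sum_evens j, ← Finset.prod_pow_eq_pow_sum]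
      refine Finset.prod_congr rfl fun k hk => ?_
      rw [Finset.mem_Ico] at hk
      rw [if_pos (by omega)]
    have e2 : (∏ k ∈ Finset.Ico (j + 1) (M + 1),
        if k < j then (X : PowerSeries ℚ) ^ (2 * k) else if k = j then (1 - (X : PowerSeries ℚ) ^ (2 * j)) else 1) = 1 := by
      apply Finset.prod_eq_one
      intro k hk
      rw [Finset.mem_Ico] at hk
      rw [if_neg (by omega), if_neg (by omega)]
    rw [e1, e2, if_neg (lt_irrefl j), if_pos rfl, mul_one]
  -- combine
  calc (∏ k ∈ range M, indicatorSeries ℚ ((· * (2 * k + 1)) '' cset j (2 * k + 1))) *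
        (∏ k ∈ Finset.Icc 1 M, indicatorSeries ℚ ((· * (2 * k)) '' cset j (2 * k))) *
        pochFin 1 2 2 M
      = (X ^ (j ^ 2) * ∏ k ∈ Finset.Ico j M, (1 + (X : PowerSeries ℚ) ^ (2 * k + 1))) *
        (X ^ (j * (j - 1)) * (1 - (X : PowerSeries ℚ) ^ (2 * j))) := by
        rw [← hodd, ← heven]; ring
    _ = (X ^ (2 * j ^ 2 - j) - X ^ (2 * j ^ 2 + j)) *
        ∏ k ∈ Finset.Ico j M, (1 - PowerSeries.C (R := ℚ) (-1) * X ^ (1 + 2 * k)) := by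
        have hprod : ∀ k, (1 - PowerSeries.C (R := ℚ) (-1) * X ^ (1 + 2 * k)) =
            (1 + (X : PowerSeries ℚ) ^ (2 * k + 1)) := by
          intro k; rw [one_sub_neg, add_comm 1 (2 * k)]
        rw [Finset.prod_congr rfl fun k _ => hprod k]
        have h1 : j ^ 2 + j * (j - 1) = 2 * j ^ 2 - j := by
          obtain ⟨i, rfl⟩ : ∃ i, j = i + 1 := ⟨j - 1, by omega⟩
          have a1 : (i + 1) ^ 2 = i * i + 2 * i + 1 := by ring
          have a2 : (i + 1) * (i + 1 - 1) = i * i + i := by rw [Nat.add_sub_cancel]; ring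
          omega
        have h2 : j ^ 2 + j * (j - 1) + 2 * j = 2 * j ^ 2 + j := by
          obtain ⟨i, rfl⟩ : ∃ i, j = i + 1 := ⟨j - 1, by omega⟩
          have a1 : (i + 1) ^ 2 = i * i + 2 * i + 1 := by ring
          have a2 : (i + 1) * (i + 1 - 1) = i * i + i := by rw [Nat.add_sub_cancel]; ring
          omega
        have hmono : (X : PowerSeries ℚ) ^ (j ^ 2) * (X ^ (j * (j - 1)) *
            (1 - (X : PowerSeries ℚ) ^ (2 * j))) = X ^ (2 * j ^ 2 - j) - X ^ (2 * j ^ 2 + j) := by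
          rw [← h1, ← h2]; ring
        rw [← hmono]; ring

/- ## assembly -/

theorem cc_pochFin (ε : ℚ) (b d m : ℕ) (hb : 0 < b) : constantCoeff (R := ℚ) (pochFin ε b d m) = 1 := by
  rw [pochFin, map_prod]
  apply Finset.prod_eq_one
  intro k _
  rw [map_sub, map_one, map_mul, constantCoeff_C, ← coeff_zero_eq_constantCoeff, coeff_X_pow,
    if_neg (by omega), mul_zero, sub_zero]

theorem lowEq_X_pow_zero {N e : ℕ} (h : N < e) : lowEq N ((X : PowerSeries ℚ) ^ e) 0 := by
  intro q hq
  rw [coeff_X_pow, if_neg (by omega), map_zero]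

/-- the series of `aeod` -/
def Aser : PowerSeries ℚ :=
  PowerSeries.mk fun d => ∑ n ∈ range (d + 1), coeff (R := ℚ) d (PowerSeries.C (R := ℚ) (aeod n : ℚ) * X ^ n)

theorem coeff_Aser (q : ℕ) : coeff (R := ℚ) q Aser = (aeod q : ℚ) := by
  rw [Aser, coeff_mk]
  simp_rw [coeff_C_mul, coeff_X_pow, mul_ite, mul_one, mul_zero]
  rw [Finset.sum_ite_eq, if_pos (by rw [mem_range]; omega)]

theorem hasSum_Aser :
    HasSum (fun n => PowerSeries.C (R := ℚ) (aeod n : ℚ) * X ^ n) Aser := by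
  apply hasSum_ord
  intro d n hdn
  rw [coeff_C_mul, coeff_X_pow, if_neg (by omega), mul_zero]

theorem sq_ineq (n : ℕ) (h : 0 < n) : n ≤ 2 * n ^ 2 - n ∧ n ≤ 2 * n ^ 2 + n := by
  have h1 : n ^ 2 = n * n := sq n
  have h2 : n ≤ n * n := Nat.le_mul_of_pos_left n h
  omega

theorem ord1 (d n : ℕ) (h : d < n) :
    coeff (R := ℚ) d ((X : PowerSeries ℚ) ^ (2 * n ^ 2 - n) * (pochFin (-1) 1 2 n)⁻¹) = 0 := by
  rw [PowerSeries.coeff_X_pow_mul', if_neg (by have := sq_ineq n (by omega); omega)]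

theorem ord2 (d n : ℕ) (h : d < n) :
    coeff (R := ℚ) d ((X : PowerSeries ℚ) ^ (2 * n ^ 2 + n) * (pochFin (-1) 1 2 n)⁻¹) = 0 := by
  rw [PowerSeries.coeff_X_pow_mul', if_neg (by have := sq_ineq n (by omega); omega)]

def S1ser : PowerSeries ℚ :=
  PowerSeries.mk fun d => ∑ n ∈ range (d + 1),
    coeff (R := ℚ) d ((X : PowerSeries ℚ) ^ (2 * n ^ 2 - n) * (pochFin (-1) 1 2 n)⁻¹)
def S2ser : PowerSeries ℚ :=
  PowerSeries.mk fun d => ∑ n ∈ range (d + 1),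
    coeff (R := ℚ) d ((X : PowerSeries ℚ) ^ (2 * n ^ 2 + n) * (pochFin (-1) 1 2 n)⁻¹)

theorem hasSum_S1 :
    HasSum (fun n => (X : PowerSeries ℚ) ^ (2 * n ^ 2 - n) * (pochFin (-1) 1 2 n)⁻¹) S1ser :=
  hasSum_ord _ ord1

theorem hasSum_S2 :
    HasSum (fun n => (X : PowerSeries ℚ) ^ (2 * n ^ 2 + n) * (pochFin (-1) 1 2 n)⁻¹) S2ser :=
  hasSum_ord _ ord2

/-- the series counting odd-distinct partitions with mex `2 j` -/
def Fser (j : ℕ) : PowerSeries ℚ := PowerSeries.mk fun q => (Scard q j : ℚ)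

theorem key_identity :
    Aser * pochInf 1 2 2 = pochInf (-1) 1 2 * (S1ser - S2ser) := by
  ext N
  set M := N + 1 with hM
  -- LHS
  have hq : lowEq N (pochInf 1 2 2) (pochFin 1 2 2 M) :=
    lowEq_pochInf 1 2 2 (by omega) (by omega) (by omega)
  have hA : lowEq N Aser (∑ j ∈ Finset.Icc 1 M, Fser j) := by
    intro q hqn
    rw [coeff_Aser, map_sum]
    have := aeod_eq_sum q M (by omega)
    rw [this]
    push_cast
    refine Finset.sum_congr rfl fun j _ => ?_
    rw [Fser, coeff_mk]
  have hL : coeff (R := ℚ) N (Aser * pochInf 1 2 2) =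
      ∑ j ∈ Finset.Icc 1 M, coeff (R := ℚ) N (Fser j * pochFin 1 2 2 M) := by
    rw [(hA.mul hq).coeff, Finset.sum_mul, map_sum]
  -- per-j evaluation
  have hT : ∀ j ∈ Finset.Icc 1 M, coeff (R := ℚ) N (Fser j * pochFin 1 2 2 M) =
      coeff (R := ℚ) N ((X ^ (2 * j ^ 2 - j) - X ^ (2 * j ^ 2 + j)) *
        ∏ k ∈ Finset.Ico j M, (1 - PowerSeries.C (R := ℚ) (-1) * X ^ (1 + 2 * k))) := by
    intro j hj
    rw [Finset.mem_Icc] at hj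
    have hF : lowEq N (Fser j) (∏ i ∈ sAll M, indicatorSeries ℚ ((· * i) '' cset j i)) := by
      intro q hqn
      rw [Fser, coeff_mk]
      exact Scard_eq_coeff (by omega) (by omega) (by omega)
    rw [(hF.mul (lowEq_rfl (a := pochFin 1 2 2 M))).coeff, dagger j M (by omega) (by omega)]
  -- RHS
  have hp : lowEq N (pochInf (-1) 1 2) (pochFin (-1) 1 2 M) :=
    lowEq_pochInf (-1) 1 2 (by omega) (by omega) (by omega)
  have hs1 : lowEq N S1ser (∑ n ∈ range M,
      (X : PowerSeries ℚ) ^ (2 * n ^ 2 - n) * (pochFin (-1) 1 2 n)⁻¹) := by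
    intro q hqn
    rw [S1ser, coeff_mk, map_sum]
    apply Finset.sum_subset (by intro x hx; rw [mem_range] at *; omega)
    intro n _ hn
    rw [mem_range, not_lt] at hn
    exact ord1 q n (by omega)
  have hs2 : lowEq N S2ser (∑ n ∈ range M,
      (X : PowerSeries ℚ) ^ (2 * n ^ 2 + n) * (pochFin (-1) 1 2 n)⁻¹) := by
    intro q hqn
    rw [S2ser, coeff_mk, map_sum]
    apply Finset.sum_subset (by intro x hx; rw [mem_range] at *; omega)
    intro n _ hn
    rw [mem_range, not_lt] at hn
    exact ord2 q n (by omega)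
  have hR : coeff (R := ℚ) N (pochInf (-1) 1 2 * (S1ser - S2ser)) =
      ∑ n ∈ range M, coeff (R := ℚ) N ((X ^ (2 * n ^ 2 - n) - X ^ (2 * n ^ 2 + n)) *
        ∏ k ∈ Finset.Ico n M, (1 - PowerSeries.C (R := ℚ) (-1) * X ^ (1 + 2 * k))) := by
    rw [(hp.mul (hs1.sub hs2)).coeff, ← Finset.sum_sub_distrib, Finset.mul_sum, map_sum]
    refine Finset.sum_congr rfl fun n hn => ?_
    rw [mem_range] at hn
    congr 1
    have hsplit : pochFin (-1) 1 2 M =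
        pochFin (-1) 1 2 n * ∏ k ∈ Finset.Ico n M, (1 - PowerSeries.C (R := ℚ) (-1) * X ^ (1 + 2 * k)) := by
      rw [pochFin, pochFin, Finset.prod_range_mul_prod_Ico _ (by omega : n ≤ M)]
    have hinv : pochFin (-1) 1 2 n * (pochFin (-1) 1 2 n)⁻¹ = 1 :=
      PowerSeries.mul_inv_cancel _ (by rw [cc_pochFin _ _ _ _ (by omega)]; norm_num)
    rw [hsplit]
    have e : (pochFin (-1) 1 2 n * ∏ k ∈ Finset.Ico n M, (1 - PowerSeries.C (R := ℚ) (-1) * X ^ (1 + 2 * k))) *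
        ((X : PowerSeries ℚ) ^ (2 * n ^ 2 - n) * (pochFin (-1) 1 2 n)⁻¹ -
          X ^ (2 * n ^ 2 + n) * (pochFin (-1) 1 2 n)⁻¹) =
        (X ^ (2 * n ^ 2 - n) - X ^ (2 * n ^ 2 + n)) *
          (∏ k ∈ Finset.Ico n M, (1 - PowerSeries.C (R := ℚ) (-1) * X ^ (1 + 2 * k))) *
          (pochFin (-1) 1 2 n * (pochFin (-1) 1 2 n)⁻¹) := by ring
    rw [e, hinv, mul_one]
  -- align the sums
  rw [hL, hR]
  rw [Finset.sum_congr rfl hT]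
  have hIcc : Finset.Icc 1 M = Finset.Ico 1 (M + 1) := by rw [Finset.Ico_add_one_right_eq_Icc]
  have hzero : ∀ a b : ℕ, N < a → N < b →
      coeff (R := ℚ) N ((X ^ a - X ^ b) *
        ∏ k ∈ Finset.Ico M M, (1 - PowerSeries.C (R := ℚ) (-1) * X ^ (1 + 2 * k))) = 0 → True := fun _ _ _ _ _ => trivial
  -- LHS sum: Icc 1 (N+1) ; RHS sum: range (N+1) = Ico 0 (N+1)
  have hL2 : ∑ j ∈ Finset.Icc 1 M, coeff (R := ℚ) N ((X ^ (2 * j ^ 2 - j) - X ^ (2 * j ^ 2 + j)) *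
        ∏ k ∈ Finset.Ico j M, (1 - PowerSeries.C (R := ℚ) (-1) * X ^ (1 + 2 * k))) =
      ∑ j ∈ Finset.Icc 1 N, coeff (R := ℚ) N ((X ^ (2 * j ^ 2 - j) - X ^ (2 * j ^ 2 + j)) *
        ∏ k ∈ Finset.Ico j M, (1 - PowerSeries.C (R := ℚ) (-1) * X ^ (1 + 2 * k))) := by
    rw [hM, Finset.sum_Icc_succ_top (by omega)]
    have hMz : coeff (R := ℚ) N ((X ^ (2 * (N+1) ^ 2 - (N+1)) - X ^ (2 * (N+1) ^ 2 + (N+1))) *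
        ∏ k ∈ Finset.Ico (N+1) (N+1), (1 - PowerSeries.C (R := ℚ) (-1) * X ^ (1 + 2 * k))) = 0 := by
      have hx1 : lowEq N ((X : PowerSeries ℚ) ^ (2 * (N+1) ^ 2 - (N+1))) 0 :=
        lowEq_X_pow_zero (by have := sq_ineq (N+1) (by omega); omega)
      have hx2 : lowEq N ((X : PowerSeries ℚ) ^ (2 * (N+1) ^ 2 + (N+1))) 0 :=
        lowEq_X_pow_zero (by have := sq_ineq (N+1) (by omega); omega)
      rw [((hx1.sub hx2).mul lowEq_rfl).coeff]
      simp
    rw [hMz, add_zero]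
  have hR2 : ∑ n ∈ range M, coeff (R := ℚ) N ((X ^ (2 * n ^ 2 - n) - X ^ (2 * n ^ 2 + n)) *
        ∏ k ∈ Finset.Ico n M, (1 - PowerSeries.C (R := ℚ) (-1) * X ^ (1 + 2 * k))) =
      ∑ n ∈ Finset.Icc 1 N, coeff (R := ℚ) N ((X ^ (2 * n ^ 2 - n) - X ^ (2 * n ^ 2 + n)) *
        ∏ k ∈ Finset.Ico n M, (1 - PowerSeries.C (R := ℚ) (-1) * X ^ (1 + 2 * k))) := by
    rw [Finset.range_eq_Ico, Finset.sum_eq_sum_Ico_succ_bot (by omega : 0 < M)]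
    have h0 : coeff (R := ℚ) N ((X ^ (2 * 0 ^ 2 - 0) - X ^ (2 * 0 ^ 2 + 0)) *
        ∏ k ∈ Finset.Ico 0 M, (1 - PowerSeries.C (R := ℚ) (-1) * X ^ (1 + 2 * k))) = 0 := by
      norm_num
    rw [h0, zero_add, hM, Finset.Ico_add_one_right_eq_Icc]
  rw [hL2, hR2]


theorem stmt_1 :
    (∑' n : ℕ, PowerSeries.C (R := ℚ) (aeod n : ℚ) * PowerSeries.X ^ n) =
      pochInf (-1) 1 2 * (pochInf 1 2 2)⁻¹ *
        ((∑' n : ℕ, PowerSeries.X ^ (2 * n ^ 2 - n) * (pochFin (-1) 1 2 n)⁻¹) -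
          ∑' n : ℕ, PowerSeries.X ^ (2 * n ^ 2 + n) * (pochFin (-1) 1 2 n)⁻¹) := by
  rw [hasSum_Aser.tsum_eq, hasSum_S1.tsum_eq, hasSum_S2.tsum_eq]
  have hQcc : constantCoeff (R := ℚ) (pochInf 1 2 2) ≠ 0 := by
    have h0 : coeff (R := ℚ) 0 (pochInf 1 2 2) = coeff (R := ℚ) 0 (pochFin 1 2 2 0) :=
      (lowEq_pochInf 1 2 2 (by omega) (by omega) (M := 0) (by omega)).coeff
    rw [coeff_zero_eq_constantCoeff] at h0
    rw [h0, cc_pochFin _ _ _ _ (by omega)]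
    norm_num
  have hQ : (pochInf 1 2 2)⁻¹ * pochInf 1 2 2 = 1 := PowerSeries.inv_mul_cancel _ hQcc
  calc Aser = Aser * ((pochInf 1 2 2)⁻¹ * pochInf 1 2 2) := by rw [hQ, mul_one]
    _ = (Aser * pochInf 1 2 2) * (pochInf 1 2 2)⁻¹ := by ring
    _ = (pochInf (-1) 1 2 * (S1ser - S2ser)) * (pochInf 1 2 2)⁻¹ := by rw [key_identity]
    _ = pochInf (-1) 1 2 * (pochInf 1 2 2)⁻¹ * (S1ser - S2ser) := by ring

end
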